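/- For the radial weight a on ℍ² with ∂_r a = tanh(r/2) and ∂_r² a = 1/(2 cosh²(r/2)), the Hessian of a applied to the gradient of a function u satisfies the pointwise lower bound ∇²a·(∇u ⊗ ∇ū) = (1/(2cosh²(r/2)))|∂_r u|² + (cosh r/sinh³ r) tanh(r/2)|∂_θ u|² ≥ c e^{-r} |∇u|² for some absolute constant c > 0 and all r > 0. -/
import Mathlib


/-- pointwise lower bound for the Hessian of the Morawetz weight `a` on ℍ²
in geodesic polar coordinates: with `∂_r²a = 1/(2cosh²(r/2))` and the angular Hessian
component `(cosh r/sinh³ r) tanh(r/2)`, one has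
`∇²a·(∇u ⊗ ∇ū) ≥ c e^{-r} |∇u|²` where `|∇u|² = |∂_r u|² + sinh⁻²r |∂_θ u|²`. -/
theorem stmt_1 :
    ∃ c : ℝ, 0 < c ∧ ∀ r : ℝ, 0 < r → ∀ ur uθ : ℝ,
      c * Real.exp (-r) * (ur ^ 2 + uθ ^ 2 / Real.sinh r ^ 2) ≤
        (1 / (2 * Real.cosh (r / 2) ^ 2)) * ur ^ 2 +
          (Real.cosh r / Real.sinh r ^ 3) * Real.tanh (r / 2) * uθ ^ 2 := by
  refine ⟨1/2, by norm_num, fun r hr ur uθ => ?_⟩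
  have ht : (1:ℝ) < Real.exp (r/2) := by
    have := Real.exp_lt_exp.2 (show (0:ℝ) < r/2 by linarith)
    simpa using this
  set t := Real.exp (r/2) with htdef
  have ht0 : (0:ℝ) < t := Real.exp_pos _
  set x := t * t with hxdef
  have hx : (1:ℝ) < x := by nlinarith
  have hx0 : (0:ℝ) < x := by linarith
  have hEr : Real.exp r = x := by
    rw [hxdef, htdef, ← Real.exp_add]; ring_nf
  have hEnr : Real.exp (-r) = x⁻¹ := by rw [Real.exp_neg, hEr]
  have hsinh : Real.sinh r = (x^2 - 1) / (2*x) := by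
    rw [Real.sinh_eq, hEr, hEnr]
    rw [eq_div_iff (by linarith : (2:ℝ)*x ≠ 0).symm.symm]
    field_simp
  have hcosh : Real.cosh r = (x^2 + 1) / (2*x) := by
    rw [Real.cosh_eq, hEr, hEnr]
    rw [eq_div_iff (by linarith : (0:ℝ) < 2*x).ne']
    field_simp
  have hti : (0:ℝ) < t⁻¹ := inv_pos.2 ht0
  have htanh : Real.tanh (r/2) = (x - 1) / (x + 1) := by
    rw [Real.tanh_eq_sinh_div_cosh, Real.sinh_eq, Real.cosh_eq, Real.exp_neg, ← htdef]
    rw [div_div_div_cancel_right₀]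
    rw [div_eq_div_iff (by linarith : (0:ℝ) < t + t⁻¹).ne' (by linarith : (0:ℝ) < x + 1).ne']
    rw [hxdef]
    field_simp
    ring
    norm_num
  clear_value x
  clear_value t
  have hsp : (0:ℝ) < Real.sinh r := by
    rw [hsinh]
    apply div_pos (by nlinarith) (by linarith)
  -- first term
  have h1 : (1/2) * Real.exp (-r) * ur ^ 2 ≤ (1 / (2 * Real.cosh (r / 2) ^ 2)) * ur ^ 2 := by
    have hcp : (0:ℝ) < Real.cosh (r/2) := Real.cosh_pos (r/2)
    have hc : Real.cosh (r/2) ^ 2 ≤ x := by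
      have h2 : Real.cosh (r/2)^2 = (Real.cosh r + 1)/2 := by
        rw [Real.cosh_sq']
        rw [show r = 2 * (r/2) by ring, Real.cosh_two_mul]
        ring_nf
        rw [Real.sinh_sq]
        ring
      rw [h2, hcosh]
      rw [div_le_iff₀ (by norm_num : (0:ℝ) < 2), div_add' _ _ _ (by linarith : (0:ℝ) < 2*x).ne']
      rw [div_le_iff₀ (by linarith : (0:ℝ) < 2*x)]
      nlinarith [sq_nonneg (x-1)]
    have hle : x⁻¹ ≤ (Real.cosh (r/2) ^ 2)⁻¹ :=
      inv_anti₀ (by positivity) hc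
    have h2c : 1 / (2 * Real.cosh (r/2)^2) = (1/2) * (Real.cosh (r/2)^2)⁻¹ := by
      rw [one_div, mul_inv]; ring
    rw [hEnr, h2c]
    nlinarith [mul_le_mul_of_nonneg_right hle (sq_nonneg ur)]
  -- second term
  have h2 : (1/2) * Real.exp (-r) * (uθ ^ 2 / Real.sinh r ^ 2) ≤
      (Real.cosh r / Real.sinh r ^ 3) * Real.tanh (r / 2) * uθ ^ 2 := by
    have key : (1/2) * Real.exp (-r) / Real.sinh r ^ 2 ≤
        (Real.cosh r / Real.sinh r ^ 3) * Real.tanh (r / 2) := by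
      have key' : (1/2) * Real.exp (-r) * Real.sinh r ≤ Real.cosh r * Real.tanh (r/2) := by
        rw [hEnr, hsinh, hcosh, htanh, inv_eq_one_div,
          div_mul_div_comm, div_mul_div_comm, div_mul_div_comm]
        rw [div_le_div_iff₀ (by nlinarith : (0:ℝ) < 2*x*(2*x)) (by nlinarith : (0:ℝ) < 2*x*(x+1))]
        have hq : (0:ℝ) ≤ 2*x^2 + x + 1 := by nlinarith
        have hfact := mul_nonneg (mul_nonneg (by linarith : (0:ℝ) ≤ 2*x) (sq_nonneg (x-1))) hq
        nlinarith [hfact]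
      have e1 : (1/2) * Real.exp (-r) / Real.sinh r ^ 2
          = ((1/2) * Real.exp (-r) * Real.sinh r) / Real.sinh r ^ 3 := by
        rw [eq_div_iff (pow_pos hsp 3).ne']
        field_simp
      have e2 : (Real.cosh r / Real.sinh r ^ 3) * Real.tanh (r/2)
          = (Real.cosh r * Real.tanh (r/2)) / Real.sinh r ^ 3 := by ring
      rw [e1, e2]
      exact (div_le_div_iff_of_pos_right (pow_pos hsp 3)).2 key'
    calc (1/2) * Real.exp (-r) * (uθ ^ 2 / Real.sinh r ^ 2)
        = ((1/2) * Real.exp (-r) / Real.sinh r ^ 2) * uθ ^ 2 := by ring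
      _ ≤ _ := mul_le_mul_of_nonneg_right key (sq_nonneg _)
  calc (1/2 : ℝ) * Real.exp (-r) * (ur ^ 2 + uθ ^ 2 / Real.sinh r ^ 2)
      = (1/2) * Real.exp (-r) * ur ^ 2 + (1/2) * Real.exp (-r) * (uθ ^ 2 / Real.sinh r ^ 2) := by ring
    _ ≤ _ := add_le_add h1 h2
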